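/- Let E be a finite-dimensional real inner product space, A : E → E₁ a surjective linear map onto a finite-dimensional real inner product space E₁, f ∈ E₁, and G : E → ℝ a convex function. Then v̄ ∈ E minimizes G over the affine space {v ∈ E : Av = f} if and only if A v̄ = f and there exists q ∈ E₁ such that A*q is a subgradient of G at v̄ (i.e., ∂G(v̄) ∩ ran(A*) ≠ ∅). -/

import Mathlib

/-!
A convex function on a finite-dimensional space is continuous, so its strict epigraph is open.
Separating it from the horizontal affine set `(v̄ + ker A) × {G v̄}` gives a functional which,
being bounded below on that set, vanishes on `ker A × {0}`; its vertical part is negative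
because points straight above `(v̄, G v̄)` lie in the epigraph. Normalising it yields a
subgradient at `v̄` orthogonal to `ker A`, i.e. in `(ker A)ᗮ = ran A*`.
-/

open RealInnerProductSpace

theorem LinearMap.map_eq_zero_of_forall_le_map_add {M : Type*} [AddCommGroup M] [Module ℝ M]
    (φ : M →ₗ[ℝ] ℝ) (K : Submodule ℝ M) (x : M) (u : ℝ) (h : ∀ k ∈ K, u ≤ φ (x + k))
    {k : M} (hk : k ∈ K) : φ k = 0 := by
  by_contra hne
  have := h (((u - φ x - 1) / φ k) • k) (K.smul_mem _ hk)
  rw [map_add, map_smul, smul_eq_mul, div_mul_cancel₀ _ hne] at this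
  linarith

theorem ConvexOn.exists_subgradient_vanishing_on_of_forall_le_add {E : Type*}
    [NormedAddCommGroup E] [NormedSpace ℝ E] {G : E → ℝ} (hG : ConvexOn ℝ Set.univ G)
    (hGc : Continuous G) (K : Submodule ℝ E) {x : E} (hmin : ∀ k ∈ K, G x ≤ G (x + k)) :
    ∃ ψ : StrongDual ℝ E, (∀ k ∈ K, ψ k = 0) ∧ ∀ w, G x + ψ (w - x) ≤ G w := by
  set epi : Set (E × ℝ) := {p | G p.1 < p.2}
  set L : Submodule ℝ (E × ℝ) := K.prod ⊥
  have hepi_convex : Convex ℝ epi := by simpa using hG.convex_strict_epigraph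
  have hepi_open : IsOpen epi := isOpen_lt (hGc.comp continuous_fst) continuous_snd
  have hdisj : Disjoint epi (((x, G x) + ·) '' L) := by
    rw [Set.disjoint_right]
    rintro _ ⟨⟨k, b⟩, hkb, rfl⟩ hlt
    obtain ⟨hk, hb⟩ : k ∈ K ∧ b = 0 := by simpa [L] using hkb
    have := hmin k hk
    simp only [epi, Set.mem_ofPred_eq, Prod.fst_add, Prod.snd_add, hb, add_zero] at hlt
    linarith
  obtain ⟨φ, u, hφepi, hφL⟩ :=
    geometric_hahn_banach_open hepi_convex hepi_open (L.convex.translate _) hdisj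
  have hφL' : ∀ p ∈ L, u ≤ φ ((x, G x) + p) := fun p hp => hφL _ ⟨p, hp, rfl⟩
  have hsplit : ∀ v t, φ (v, t) = φ (v, 0) + t * φ (0, 1) := fun v t => by
    rw [← smul_eq_mul, ← map_smul, ← map_add]
    simp
  set r := φ (0, 1)
  have hux : u ≤ φ (x, 0) + G x * r := by
    simpa [← hsplit] using hφL' 0 L.zero_mem
  have hlt : ∀ w t, G w < t → φ (w, 0) + t * r < u := fun w t ht => by
    simpa [← hsplit] using hφepi (w, t) ht
  have hr : r < 0 := by
    have := hlt x (G x + 1) (lt_add_one _)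
    nlinarith
  refine ⟨(-r)⁻¹ • φ.comp (ContinuousLinearMap.inl ℝ E ℝ), fun k hk => ?_, fun w => ?_⟩
  · have := φ.toLinearMap.map_eq_zero_of_forall_le_map_add L _ u hφL'
      (k := (k, 0)) (Submodule.mem_prod.2 ⟨hk, Submodule.zero_mem _⟩)
    simpa using Or.inr this
  · refine le_of_forall_gt_imp_ge_of_dense fun t ht => ?_
    have hφ := hlt w t ht
    have hsub : φ (w - x, 0) = φ (w, 0) - φ (x, 0) := by
      rw [← map_sub, Prod.mk_sub_mk, sub_zero]
    have hrpos : 0 < -r := neg_pos.2 hr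
    simp only [FunLike.coe_smul, ContinuousLinearMap.coe_comp, Pi.smul_apply,
      Function.comp_apply, ContinuousLinearMap.inl_apply, smul_eq_mul, hsub]
    rw [← le_sub_iff_add_le', inv_mul_le_iff₀ hrpos]
    nlinarith

theorem statement7 {E E₁ : Type*}
    [NormedAddCommGroup E] [InnerProductSpace ℝ E] [FiniteDimensional ℝ E]
    [NormedAddCommGroup E₁] [InnerProductSpace ℝ E₁] [FiniteDimensional ℝ E₁]
    (A : E →ₗ[ℝ] E₁) (f : E₁)
    (G : E → ℝ) (hG : ConvexOn ℝ Set.univ G) (vbar : E) :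
    (A vbar = f ∧ ∀ v, A v = f → G vbar ≤ G v) ↔
      (A vbar = f ∧ ∃ q : E₁, ∀ w, G vbar + ⟪(LinearMap.adjoint A) q, w - vbar⟫ ≤ G w) := by
  constructor
  · rintro ⟨hvf, hmin⟩
    have hGc : Continuous G := continuousOn_univ.mp (hG.continuousOn isOpen_univ)
    obtain ⟨ψ, hψA, hψ⟩ := hG.exists_subgradient_vanishing_on_of_forall_le_add hGc
      (LinearMap.ker A) fun k hk => hmin _ (by simp_all)
    have hrange : (InnerProductSpace.toDual ℝ E).symm ψ ∈ A.adjoint.range := by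
      rw [← A.orthogonal_ker, Submodule.mem_orthogonal']
      intro k hk
      rw [InnerProductSpace.toDual_symm_apply, hψA k hk]
    obtain ⟨q, hq⟩ := hrange
    exact ⟨hvf, q, fun w => by rw [hq, InnerProductSpace.toDual_symm_apply]; exact hψ w⟩
  · rintro ⟨hvf, q, hq⟩
    refine ⟨hvf, fun v hv => ?_⟩
    simpa [LinearMap.adjoint_inner_left, hv, hvf] using hq v
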